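/- arXiv:0907.3991 — 2 statements merged into one kernel-verified Lean document; each statement's English description precedes it below -/
import Mathlib

section
/- Let H = (H_1,...,H_n) be an n-tuple of polynomials in K[z_1,...,z_n] and set P(ξ,z) = ⟨ξ,H⟩ = Σ_{i=1}^n ξ_i H_i(z) ∈ K[ξ,z]. If there exists an integer M such that Λ^m(P^m) = 0 for all m ≥ M, then in fact Λ^m(P^m) = 0 for all m ≥ 1. (This establishes a special case of the conjecture that for any P ∈ K[ξ,z], the vanishing of Λ^m(P^m) for all large m implies its vanishing for all m ≥ 1.) -/
/-!
With `Sₘ(f) = ∑_{i₁,…,iₘ} ∂_{i₁} ⋯ ∂_{iₘ} (H_{i₁} ⋯ H_{iₘ} f)` one has `Λᵐ(Pᵐ) = m! Sₘ(1)`, because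
`∂_{ξᵢ} P = Hᵢ` and `∂_{ξᵢ}` commutes with the `z`-derivatives and with multiplication by the `Hⱼ`.
The heart of the proof is the inversion identity `(∑ₘ tᵐ Sₘ(f)/m! ∘ F) · det(I - t JH) = f` in
`K[z]⟦t⟧`, where `F = z - t H(z)`. It is proved modulo `tᴹ` by induction on `M`: once it holds modulo
`tᴹ` for every `f`, the chain rule in `z` and in `t` together with Jacobi's formula for the derivative
of the determinant show that the `t`-derivative of the left side vanishes modulo `tᴹ`.
If `Sₘ(1) = 0` for large `m`, the first factor for `f = 1` is a polynomial in `t`, so `det(I - t JH)`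
is a unit of `K[z][t]` with constant term `1`, hence equals `1`; the identity then reads
`∑ₘ tᵐ Sₘ(1)/m! ∘ F = 1`, which forces `Sₘ(1) = 0` for all `m ≥ 1`.
-/

open MvPolynomial

/-- The Jacobian matrix `(∂H_i/∂z_j)` of an `n`-tuple of polynomials. -/
noncomputable def jacMat {K : Type*} [CommRing K] {n : ℕ}
    (H : Fin n → MvPolynomial (Fin n) K) :
    Matrix (Fin n) (Fin n) (MvPolynomial (Fin n) K) :=
  Matrix.of fun i j => pderiv j (H i)

/-- The operator `Λ = Σ_i ∂_{ξ_i} ∂_{z_i}` on `K[ξ,z]`, where the `ξ`-variables are indexed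
by `Sum.inl` and the `z`-variables by `Sum.inr`. -/
noncomputable def Lam (K : Type*) [CommRing K] (n : ℕ) :
    Module.End K (MvPolynomial (Fin n ⊕ Fin n) K) :=
  ∑ i : Fin n,
    ((pderiv (Sum.inl i)).toLinearMap ∘ₗ (pderiv (Sum.inr i)).toLinearMap)

/-- `P = ⟨ξ, H⟩ = Σ_i ξ_i H_i(z) ∈ K[ξ,z]`. -/
noncomputable def PofH {K : Type*} [CommRing K] {n : ℕ}
    (H : Fin n → MvPolynomial (Fin n) K) : MvPolynomial (Fin n ⊕ Fin n) K :=
  ∑ i : Fin n, X (Sum.inl i) * rename Sum.inr (H i)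

theorem MvPolynomial.pderiv_comm {R σ : Type*} [CommRing R] (i j : σ) (p : MvPolynomial σ R) :
    pderiv i (pderiv j p) = pderiv j (pderiv i p) := by
  have h : ⁅pderiv i, pderiv j⁆ = (0 : Derivation R (MvPolynomial σ R) (MvPolynomial σ R)) :=
    derivation_ext fun k => by
      classical
      rw [Derivation.commutator_apply]
      simp [pderiv_X, Pi.single_apply, apply_ite]
  rw [← sub_eq_zero, ← Derivation.commutator_apply, h, Derivation.zero_apply]

namespace Derivation

theorem map_mvPolynomial_aeval {K A σ : Type*} [CommSemiring K] [CommRing A] [Algebra K A]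
    [Fintype σ] (D : Derivation K A A) (x : σ → A) (p : MvPolynomial σ K) :
    D (aeval x p) = ∑ i, aeval x (pderiv i p) * D (x i) := by
  classical
  induction p using MvPolynomial.induction_on with
  | C a => simp
  | add p q hp hq => simp [hp, hq, add_mul, Finset.sum_add_distrib]
  | mul_X p i hp =>
    simp [hp, pderiv_X, Pi.single_apply, add_mul, Finset.sum_add_distrib, apply_ite,
      Finset.mul_sum, mul_assoc]

section

variable {R A : Type*} [CommSemiring R] [CommRing A] [Algebra R A] (D : Derivation R A A)

theorem map_prod_eq_sum_prod_update {ι : Type*} [DecidableEq ι] (s : Finset ι) (f : ι → A) :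
    D (∏ i ∈ s, f i) = ∑ i ∈ s, ∏ j ∈ s, Function.update f i (D (f i)) j := by
  induction s using Finset.induction_on with
  | empty => simp
  | insert a s ha ih =>
    have hs (i : ι) (hi : i ∈ s) : i ≠ a := ne_of_mem_of_not_mem hi ha
    rw [Finset.prod_insert ha, leibniz, ih, Finset.sum_insert ha, Finset.prod_insert ha,
      Function.update_self, Finset.prod_congr rfl fun j hj => Function.update_of_ne (hs j hj) _ _,
      smul_eq_mul, smul_eq_mul, Finset.mul_sum, add_comm, mul_comm]
    congr 1
    refine Finset.sum_congr rfl fun i hi => ?_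
    rw [Finset.prod_insert ha, Function.update_of_ne (hs i hi).symm]

theorem map_det {ι : Type*} [Fintype ι] [DecidableEq ι] (M : Matrix ι ι A) :
    D M.det = (M.adjugate * M.map D).trace := by
  have hcol (i : ι) : (M.updateCol i fun r => D (M r i)).det = (M.adjugate * M.map D) i i := by
    rw [← Matrix.cramer_apply, Matrix.cramer_eq_adjugate_mulVec]
    rfl
  simp only [Matrix.trace, Matrix.diag, ← hcol, Matrix.det_apply, map_sum, map_zsmul_unit,
    map_prod_eq_sum_prod_update, Finset.smul_sum]
  rw [Finset.sum_comm]
  refine Finset.sum_congr rfl fun i _ => Finset.sum_congr rfl fun σ _ => ?_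
  congr 1
  refine Finset.prod_congr rfl fun j _ => ?_
  rcases eq_or_ne j i with rfl | hji
  · simp
  · simp [Function.update_of_ne hji, Matrix.updateCol_ne hji]

theorem dvd_map_of_map_eq_zero {x a : A} (hx : D x = 0) (hxa : x ∣ a) : x ∣ D a := by
  obtain ⟨b, rfl⟩ := hxa
  simp [leibniz, hx]

end

section

variable {R A : Type*} [CommRing R] [CommRing A] [Algebra R A] (d : Derivation R A A)

noncomputable def mapCoeffsSelf : Derivation R (Polynomial A) (Polynomial A) :=
  PolynomialModule.equivPolynomialSelf.toLinearMap.compDer d.mapCoeffs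

@[simp]
theorem coeff_mapCoeffsSelf (p : Polynomial A) (i : ℕ) :
    (d.mapCoeffsSelf p).coeff i = d (p.coeff i) := rfl

@[simp]
theorem mapCoeffsSelf_X : d.mapCoeffsSelf Polynomial.X = 0 := by
  simp [mapCoeffsSelf]

@[simp]
theorem mapCoeffsSelf_C (a : A) : d.mapCoeffsSelf (Polynomial.C a) = Polynomial.C (d a) := by
  ext i
  simp [Polynomial.coeff_C, apply_ite d]

end

end Derivation

namespace Polynomial

section Semiring

variable {R : Type*} [Semiring R]

theorem X_pow_succ_dvd_of_X_pow_dvd_derivative [NoZeroDivisors R] [CharZero R] {p : R[X]}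
    {M : ℕ} (h0 : p.coeff 0 = 0) (h : X ^ M ∣ derivative p) : X ^ (M + 1) ∣ p := by
  rw [X_pow_dvd_iff] at h ⊢
  rintro (_ | d) hd
  · exact h0
  · have := h d (by omega)
    rw [coeff_derivative, mul_eq_zero] at this
    exact this.resolve_right (by exact_mod_cast d.succ_ne_zero)

theorem eq_zero_of_forall_X_pow_dvd {p : R[X]} (M₀ : ℕ) (h : ∀ M, M₀ ≤ M → X ^ M ∣ p) :
    p = 0 := by
  ext d
  exact X_pow_dvd_iff.mp (h (max M₀ (d + 1)) le_sup_left) d (by omega)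

end Semiring

variable {R : Type*} [CommRing R]

theorem isCoprime_X_pow_of_coeff_zero_eq_one {p : R[X]} (hp : p.coeff 0 = 1) (M : ℕ) :
    IsCoprime (X ^ M) p := by
  obtain ⟨q, hq⟩ : X ∣ p - 1 := by simp [X_dvd_iff, hp]
  exact IsCoprime.pow_left ⟨-q, 1, by linear_combination hq⟩

theorem eq_one_of_mul_eq_one_of_coeff_zero_eq_one [IsDomain R] {p q : R[X]} (h : p * q = 1)
    (hq : q.coeff 0 = 1) : q = 1 := by
  obtain ⟨r, -, rfl⟩ := isUnit_iff.mp (IsUnit.of_mul_eq_one_right p h)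
  rw [coeff_C_zero] at hq
  rw [hq, map_one]

end Polynomial

namespace MvPolynomial

variable {R σ τ ι : Type*} [CommRing R] [Fintype ι]

/-- `iteratedDiv v H m f = ∑_{i₁,…,iₘ} ∂_{v i₁} ⋯ ∂_{v iₘ} (H i₁ ⋯ H iₘ f)`. -/
noncomputable def iteratedDiv (v : ι → σ) (H : ι → MvPolynomial σ R) :
    ℕ → MvPolynomial σ R →ₗ[R] MvPolynomial σ R
  | 0 => LinearMap.id
  | m + 1 => ∑ i, (pderiv (v i)).toLinearMap ∘ₗ iteratedDiv v H m ∘ₗ LinearMap.mulLeft R (H i)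

variable (v : ι → σ) (H : ι → MvPolynomial σ R)

@[simp]
theorem iteratedDiv_zero (f : MvPolynomial σ R) : iteratedDiv v H 0 f = f := rfl

theorem iteratedDiv_succ (m : ℕ) (f : MvPolynomial σ R) :
    iteratedDiv v H (m + 1) f = ∑ i, pderiv (v i) (iteratedDiv v H m (H i * f)) := by
  simp [iteratedDiv]

theorem pderiv_iteratedDiv {x : σ} (hx : ∀ i, pderiv x (H i) = 0) (m : ℕ)
    (f : MvPolynomial σ R) :
    pderiv x (iteratedDiv v H m f) = iteratedDiv v H m (pderiv x f) := by
  induction m generalizing f with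
  | zero => rfl
  | succ m ih => simp [iteratedDiv_succ, pderiv_comm x, ih, hx]

theorem rename_iteratedDiv {e : σ → τ} (he : Function.Injective e) (m : ℕ)
    (f : MvPolynomial σ R) :
    rename e (iteratedDiv v H m f) = iteratedDiv (e ∘ v) (rename e ∘ H) m (rename e f) := by
  induction m generalizing f with
  | zero => rfl
  | succ m ih =>
    simp only [iteratedDiv_succ, map_sum, ← pderiv_rename he, ih, map_mul, Function.comp_apply]

end MvPolynomial

section Lam

variable {K : Type*} [CommRing K] {n : ℕ} (H : Fin n → MvPolynomial (Fin n) K)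

theorem pderiv_inl_rename_inr (i : Fin n) (g : MvPolynomial (Fin n) K) :
    pderiv (Sum.inl i : Fin n ⊕ Fin n) (rename Sum.inr g) = 0 :=
  pderiv_eq_zero_of_notMem_vars fun h => by simpa using vars_rename Sum.inr g h

theorem pderiv_inl_PofH (i : Fin n) : pderiv (Sum.inl i) (PofH H) = rename Sum.inr (H i) := by
  classical
  simp [PofH, pderiv_inl_rename_inr, pderiv_X, Pi.single_apply]

theorem lam_iteratedDiv_pow_succ (k r : ℕ) :
    Lam K n (iteratedDiv Sum.inr (rename Sum.inr ∘ H) k (PofH H ^ (r + 1)))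
      = (r + 1) • iteratedDiv Sum.inr (rename Sum.inr ∘ H) (k + 1) (PofH H ^ r) := by
  simp only [Lam, LinearMap.sum_apply, LinearMap.comp_apply, Derivation.coeFn_coe,
    iteratedDiv_succ, Finset.smul_sum]
  refine Finset.sum_congr rfl fun i _ => ?_
  rw [pderiv_comm, pderiv_iteratedDiv _ (rename Sum.inr ∘ H)
    fun j => pderiv_inl_rename_inr i (H j), pderiv_pow, pderiv_inl_PofH, Nat.add_sub_cancel,
    ← map_nsmul, ← map_nsmul, nsmul_eq_mul, Function.comp_apply]
  congr 2
  ring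

theorem lam_pow_apply_pow_add (k r : ℕ) :
    (Lam K n ^ k) (PofH H ^ (r + k))
      = (r + 1).ascFactorial k • iteratedDiv Sum.inr (rename Sum.inr ∘ H) k (PofH H ^ r) := by
  induction k generalizing r with
  | zero => simp
  | succ k ih =>
    rw [pow_succ', Module.End.mul_apply, ← add_assoc, add_right_comm, ih, map_nsmul,
      lam_iteratedDiv_pow_succ, smul_smul, mul_comm, Nat.succ_ascFactorial,
      Nat.ascFactorial_succ]

theorem lam_pow_PofH_pow (m : ℕ) :
    (Lam K n ^ m) (PofH H ^ m) = m.factorial • rename Sum.inr (iteratedDiv id H m 1) := by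
  simpa [rename_iteratedDiv _ _ Sum.inr_injective, Nat.one_ascFactorial] using
    lam_pow_apply_pow_add H m 0

theorem lam_pow_PofH_pow_eq_zero_iff [IsDomain K] [CharZero K] (m : ℕ) :
    (Lam K n ^ m) (PofH H ^ m) = 0 ↔ iteratedDiv id H m 1 = 0 := by
  rw [lam_pow_PofH_pow, smul_eq_zero, (rename_injective _ Sum.inr_injective).eq_iff' (map_zero _)]
  simp [Nat.factorial_ne_zero]

end Lam

section Substitution

open scoped Matrix

variable {K : Type*} [CommRing K] {n : ℕ} (H : Fin n → MvPolynomial (Fin n) K)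

local notation "Rz" => MvPolynomial (Fin n) K

/-- Composition with `F = z - t H(z)`, where `t` is the variable of `Polynomial Rz`. -/
noncomputable def substF : Rz →ₐ[K] Polynomial Rz :=
  aeval fun i => Polynomial.C (X i) - Polynomial.X * Polynomial.C (H i)

/-- The transposed Jacobian matrix `(∂F_k/∂z_j)_{j,k}` of `F = z - t H(z)`. -/
noncomputable def jacobianF : Matrix (Fin n) (Fin n) (Polynomial Rz) :=
  1 - (Polynomial.X : Polynomial Rz) • (jacMat H)ᵀ.map Polynomial.C

noncomputable def substSeries (c : ℕ → Rz) (M : ℕ) : Polynomial Rz :=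
  ∑ m ∈ Finset.range M, Polynomial.X ^ m * substF H (c m)

theorem jacobianF_apply (j k : Fin n) :
    jacobianF H j k
      = (if j = k then 1 else 0) - Polynomial.X * Polynomial.C (pderiv j (H k)) := by
  simp only [jacobianF, Matrix.sub_apply, Matrix.one_apply, Matrix.smul_apply, Matrix.map_apply,
    Matrix.transpose_apply, jacMat, Matrix.of_apply, smul_eq_mul]

@[simp]
theorem coeff_zero_substF (a : Rz) : (substF H a).coeff 0 = a := by
  induction a using MvPolynomial.induction_on with
  | C a => simp [substF, Polynomial.coeff_C]
  | add p q hp hq => simp [hp, hq]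
  | mul_X p i hp =>
    rw [map_mul, Polynomial.mul_coeff_zero, hp]
    simp [substF]

theorem mapCoeffsSelf_pderiv_substF (j : Fin n) (a : Rz) :
    (pderiv j).mapCoeffsSelf (substF H a) = ∑ k, jacobianF H j k * substF H (pderiv k a) := by
  classical
  rw [substF, Derivation.map_mvPolynomial_aeval]
  refine Finset.sum_congr rfl fun k _ => ?_
  rw [mul_comm]
  congr 1
  simp only [map_sub, Derivation.leibniz, Derivation.mapCoeffsSelf_X, Derivation.mapCoeffsSelf_C,
    jacobianF_apply, pderiv_X]
  rcases eq_or_ne k j with rfl | h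
  · simp
  · simp [h, h.symm]

theorem derivative_substF (a : Rz) :
    Polynomial.derivative (substF H a) = -∑ k, Polynomial.C (H k) * substF H (pderiv k a) := by
  rw [← Finset.sum_neg_distrib]
  refine ((Polynomial.derivative' (R := Rz)).restrictScalars K |>.map_mvPolynomial_aeval _ a).trans
    (Finset.sum_congr rfl fun k _ => ?_)
  have hF : Polynomial.derivative (Polynomial.C (X k) - Polynomial.X * Polynomial.C (H k))
      = -Polynomial.C (H k) := by simp
  change substF H _ * Polynomial.derivative _ = _
  rw [hF]
  ring

theorem coeff_zero_det_jacobianF : (jacobianF H).det.coeff 0 = 1 := by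
  have h : (Polynomial.evalRingHom 0).mapMatrix (jacobianF H) = 1 := by
    ext j k : 1
    simp only [RingHom.mapMatrix_apply, Matrix.map_apply, jacobianF_apply, Matrix.one_apply]
    split_ifs <;> simp
  rw [Polynomial.coeff_zero_eq_eval_zero, ← Polynomial.coe_evalRingHom, RingHom.map_det, h,
    Matrix.det_one]

theorem derivative_det_jacobianF :
    Polynomial.derivative (jacobianF H).det
      = -((jacobianF H).adjugate * (jacMat H)ᵀ.map Polynomial.C).trace := by
  have hmap : (jacobianF H).map Polynomial.derivative = -(jacMat H)ᵀ.map Polynomial.C := by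
    ext j k : 1
    simp only [Matrix.map_apply, jacobianF_apply, Matrix.neg_apply, map_sub,
      Polynomial.derivative_mul, Polynomial.derivative_X, Polynomial.derivative_C, mul_zero,
      add_zero, one_mul, Matrix.transpose_apply, jacMat, Matrix.of_apply]
    split_ifs <;> simp
  rw [show Polynomial.derivative (jacobianF H).det = Polynomial.derivative' (jacobianF H).det
    from rfl, Derivation.map_det]
  change ((jacobianF H).adjugate * (jacobianF H).map Polynomial.derivative).trace = _
  rw [hmap, Matrix.mul_neg, Matrix.trace_neg]

theorem substSeries_succ (c : ℕ → Rz) (M : ℕ) :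
    substSeries H c (M + 1) = substSeries H c M + Polynomial.X ^ M * substF H (c M) :=
  Finset.sum_range_succ _ _

theorem substSeries_sum {ι : Type*} (s : Finset ι) (c : ι → ℕ → Rz) (M : ℕ) :
    substSeries H (fun m => ∑ i ∈ s, c i m) M = ∑ i ∈ s, substSeries H (c i) M := by
  simp only [substSeries, map_sum, Finset.mul_sum]
  exact Finset.sum_comm

@[simp]
theorem coeff_zero_substSeries_succ (c : ℕ → Rz) (M : ℕ) :
    (substSeries H c (M + 1)).coeff 0 = c 0 := by
  simp [substSeries, Finset.sum_range_succ', pow_succ, mul_assoc]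

theorem substSeries_eq_of_le {c : ℕ → Rz} {M₀ M : ℕ} (hc : ∀ m, M₀ ≤ m → c m = 0)
    (hM : M₀ ≤ M) : substSeries H c M = substSeries H c M₀ := by
  induction M, hM using Nat.le_induction with
  | base => rfl
  | succ M hM ih => rw [substSeries_succ, ih, hc M hM, map_zero, mul_zero, add_zero]

theorem eq_zero_of_X_pow_dvd_substSeries_sub_one [IsDomain K] {c : ℕ → Rz} (h0 : c 0 = 1)
    (h : ∀ M, Polynomial.X ^ M ∣ substSeries H c M - 1) {m : ℕ} (hm : m ≠ 0) : c m = 0 := by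
  induction m using Nat.strong_induction_on with
  | _ m ih =>
    have hm1 : substSeries H c m = 1 := by
      rw [substSeries, Finset.sum_eq_single_of_mem 0 (by simpa [Nat.pos_iff_ne_zero] using hm)]
      · simp [h0]
      · intro k hk hk0
        rw [ih k (Finset.mem_range.mp hk) hk0, map_zero, mul_zero]
    have := h (m + 1)
    rwa [substSeries_succ, hm1, add_sub_cancel_left, pow_succ,
      mul_dvd_mul_iff_left (pow_ne_zero _ Polynomial.X_ne_zero), Polynomial.X_dvd_iff,
      coeff_zero_substF] at this

theorem mapCoeffsSelf_pderiv_substSeries (j : Fin n) (c : ℕ → Rz) (M : ℕ) :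
    (pderiv j).mapCoeffsSelf (substSeries H c M)
      = ∑ k, jacobianF H j k * substSeries H (fun m => pderiv k (c m)) M := by
  simp only [substSeries, map_sum, Derivation.leibniz, Derivation.leibniz_pow,
    Derivation.mapCoeffsSelf_X, mul_zero, smul_zero, add_zero, mapCoeffsSelf_pderiv_substF,
    Finset.mul_sum, smul_eq_mul]
  rw [Finset.sum_comm]
  exact Finset.sum_congr rfl fun _ _ => Finset.sum_congr rfl fun _ _ => by ring

theorem derivative_substSeries_succ (c : ℕ → Rz) (M : ℕ) :
    Polynomial.derivative (substSeries H c (M + 1))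
      = substSeries H (fun m => (m + 1) • c (m + 1)) M
        - ∑ k, Polynomial.C (H k) * substSeries H (fun m => pderiv k (c m)) (M + 1) := by
  simp only [substSeries, map_sum, Polynomial.derivative_mul, Polynomial.derivative_X_pow,
    derivative_substF, map_nsmul]
  rw [Finset.sum_add_distrib, Finset.sum_range_succ']
  simp only [Nat.cast_zero, map_zero, zero_mul, add_zero, Nat.add_sub_cancel, Finset.mul_sum,
    nsmul_eq_mul, sub_eq_add_neg, map_natCast]
  rw [Finset.sum_comm (s := Finset.univ)]
  congr 1
  · exact Finset.sum_congr rfl fun _ _ => by push_cast; ring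
  · simp only [← Finset.sum_neg_distrib, Finset.mul_sum]
    exact Finset.sum_congr rfl fun _ _ => Finset.sum_congr rfl fun _ _ => by ring

end Substitution

section Inversion

open scoped Matrix

variable {K : Type*} [Field K] {n : ℕ} (H : Fin n → MvPolynomial (Fin n) K)

local notation "Rz" => MvPolynomial (Fin n) K

noncomputable def expDivCoeff (f : Rz) (m : ℕ) : Rz :=
  (m.factorial : K)⁻¹ • iteratedDiv id H m f

@[simp]
theorem expDivCoeff_zero (f : Rz) : expDivCoeff H f 0 = f := by
  simp [expDivCoeff]

theorem expDivCoeff_eq_zero_iff [CharZero K] (f : Rz) (m : ℕ) :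
    expDivCoeff H f m = 0 ↔ iteratedDiv id H m f = 0 := by
  simp [expDivCoeff, Nat.factorial_ne_zero]

theorem succ_nsmul_expDivCoeff_succ [CharZero K] (f : Rz) (m : ℕ) :
    (m + 1) • expDivCoeff H f (m + 1) = ∑ i, pderiv i (expDivCoeff H (H i * f) m) := by
  have : ((m : K) + 1) * ((m + 1).factorial : K)⁻¹ = (m.factorial : K)⁻¹ := by
    rw [Nat.factorial_succ, Nat.cast_mul, mul_inv, ← mul_assoc, Nat.cast_add_one,
      mul_inv_cancel₀ (Nat.cast_add_one_ne_zero m), one_mul]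
  simp [expDivCoeff, iteratedDiv_succ, ← Nat.cast_smul_eq_nsmul K, smul_smul, this,
    Finset.smul_sum]

noncomputable def commutatorMatrix (M : ℕ) (f : Rz) : Matrix (Fin n) (Fin n) (Polynomial Rz) :=
  Matrix.of fun k i =>
    substSeries H (fun m => pderiv k (expDivCoeff H (H i * f) m)) M
      - Polynomial.C (H i) * substSeries H (fun m => pderiv k (expDivCoeff H f m)) M

theorem X_pow_dvd_derivative_substSeries_sub_trace [CharZero K] (M : ℕ) (f : Rz) :
    Polynomial.X ^ M ∣ Polynomial.derivative (substSeries H (expDivCoeff H f) (M + 1))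
      - (commutatorMatrix H M f).trace := by
  rw [derivative_substSeries_succ]
  simp only [succ_nsmul_expDivCoeff_succ, substSeries_sum, substSeries_succ, Matrix.trace,
    Matrix.diag, commutatorMatrix, Matrix.of_apply, mul_add, Finset.sum_add_distrib,
    Finset.sum_sub_distrib]
  rw [← dvd_neg]
  convert Finset.dvd_sum fun k (_ : k ∈ Finset.univ) => (dvd_mul_right (Polynomial.X ^ M)
    (substF H (pderiv k (expDivCoeff H f M)))).mul_left (Polynomial.C (H k)) using 1
  ring

def InversionModXPow (M : ℕ) : Prop :=
  ∀ g, Polynomial.X ^ M ∣ substSeries H (expDivCoeff H g) M * (jacobianF H).det - Polynomial.C g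

theorem X_pow_dvd_substSeries_expDivCoeff_mul_sub {M : ℕ} (hM : InversionModXPow H M) (a g : Rz) :
    Polynomial.X ^ M ∣ substSeries H (expDivCoeff H (a * g)) M
      - Polynomial.C a * substSeries H (expDivCoeff H g) M := by
  refine (Polynomial.isCoprime_X_pow_of_coeff_zero_eq_one
    (coeff_zero_det_jacobianF H) M).dvd_of_dvd_mul_right ?_
  convert dvd_sub (hM (a * g)) ((hM g).mul_left (Polynomial.C a)) using 1
  rw [map_mul]
  ring

theorem X_pow_dvd_det_mul_trace_sub {M : ℕ} (hM : InversionModXPow H M) (f : Rz) :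
    Polynomial.X ^ M ∣ (jacobianF H).det * (commutatorMatrix H M f).trace
      - substSeries H (expDivCoeff H f) M
        * ((jacobianF H).adjugate * (jacMat H)ᵀ.map Polynomial.C).trace := by
  set B := jacobianF H
  set W := (jacMat H)ᵀ.map Polynomial.C
  set Φ := substSeries H (expDivCoeff H f) M
  set Z := commutatorMatrix H M f
  -- `∂ⱼ` applied to `Φ(Hᵢ f) ≡ Hᵢ Φ(f)` gives `B Z ≡ Φ(f) W` by the chain rule.
  have hBZ (j i : Fin n) : Polynomial.X ^ M ∣ (B * Z - Φ • W) j i := by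
    have e : (B * Z - Φ • W) j i = (pderiv j).mapCoeffsSelf
        (substSeries H (expDivCoeff H (H i * f)) M - Polynomial.C (H i) * Φ) := by
      simp only [Φ, Z, W, commutatorMatrix, map_sub, Derivation.leibniz,
        mapCoeffsSelf_pderiv_substSeries, Derivation.mapCoeffsSelf_C, Matrix.sub_apply,
        Matrix.mul_apply, Matrix.smul_apply, Matrix.of_apply, Matrix.map_apply,
        Matrix.transpose_apply, jacMat, mul_sub, Finset.sum_sub_distrib, Finset.mul_sum,
        smul_eq_mul]
      simp only [B, mul_left_comm (Polynomial.C (H i))]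
      ring
    rw [e]
    refine Derivation.dvd_map_of_map_eq_zero _ (by simp [Derivation.leibniz_pow])
      (X_pow_dvd_substSeries_expDivCoeff_mul_sub H hM _ _)
  have e : B.adjugate * (B * Z - Φ • W) = B.det • Z - Φ • (B.adjugate * W) := by
    rw [Matrix.mul_sub, ← Matrix.mul_assoc, Matrix.adjugate_mul, Matrix.smul_mul, Matrix.one_mul,
      Matrix.mul_smul]
  have htr := congrArg Matrix.trace e
  rw [Matrix.trace_sub, Matrix.trace_smul, Matrix.trace_smul, smul_eq_mul, smul_eq_mul] at htr
  rw [← htr]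
  refine Finset.dvd_sum fun i _ => ?_
  rw [Matrix.diag_apply, Matrix.mul_apply]
  exact Finset.dvd_sum fun j _ => (hBZ j i).mul_left _

theorem X_pow_dvd_derivative_substSeries_expDivCoeff_mul_det [CharZero K] {M : ℕ}
    (hM : InversionModXPow H M) (f : Rz) :
    Polynomial.X ^ M ∣
      Polynomial.derivative (substSeries H (expDivCoeff H f) (M + 1) * (jacobianF H).det) := by
  have hΦ : Polynomial.X ^ M ∣
      substSeries H (expDivCoeff H f) (M + 1) - substSeries H (expDivCoeff H f) M := by
    simp [substSeries_succ]
  rw [Polynomial.derivative_mul, derivative_det_jacobianF]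
  convert dvd_add (dvd_sub
    ((X_pow_dvd_derivative_substSeries_sub_trace H M f).mul_left (jacobianF H).det)
    (hΦ.mul_left ((jacobianF H).adjugate * (jacMat H)ᵀ.map Polynomial.C).trace))
    (X_pow_dvd_det_mul_trace_sub H hM f) using 1
  ring

theorem inversionModXPow [CharZero K] (M : ℕ) : InversionModXPow H M := by
  induction M with
  | zero => simp [InversionModXPow]
  | succ M ih =>
    intro f
    refine Polynomial.X_pow_succ_dvd_of_X_pow_dvd_derivative ?_ ?_
    · simp [Polynomial.mul_coeff_zero, coeff_zero_det_jacobianF]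
    · rw [map_sub, Polynomial.derivative_C, sub_zero]
      exact X_pow_dvd_derivative_substSeries_expDivCoeff_mul_det H ih f

end Inversion

/-- If `Λ^m(P^m) = 0` for all sufficiently large `m`, where `P = ⟨ξ,H⟩`,
then in fact `Λ^m(P^m) = 0` for all `m ≥ 1`. -/
theorem lam_pow_vanish_of_eventually_lam_pow_vanish
    {K : Type*} [Field K] [CharZero K] {n : ℕ}
    (H : Fin n → MvPolynomial (Fin n) K)
    (h : ∃ M : ℕ, ∀ m : ℕ, M ≤ m → (Lam K n ^ m) (PofH H ^ m) = 0) :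
    ∀ m : ℕ, 1 ≤ m → (Lam K n ^ m) (PofH H ^ m) = 0 := by
  have hiff (m : ℕ) : (Lam K n ^ m) (PofH H ^ m) = 0 ↔ expDivCoeff H 1 m = 0 :=
    (lam_pow_PofH_pow_eq_zero_iff H m).trans (expDivCoeff_eq_zero_iff H 1 m).symm
  obtain ⟨M₀, hM₀⟩ := h
  have hstable (M : ℕ) (hM : M₀ ≤ M) :
      substSeries H (expDivCoeff H 1) M = substSeries H (expDivCoeff H 1) M₀ :=
    substSeries_eq_of_le H (fun m hm => (hiff m).mp (hM₀ m hm)) hM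
  have hinv : substSeries H (expDivCoeff H 1) M₀ * (jacobianF H).det = 1 := by
    refine sub_eq_zero.mp (Polynomial.eq_zero_of_forall_X_pow_dvd M₀ fun M hM => ?_)
    simpa [hstable M hM] using inversionModXPow H M 1
  have hdet : (jacobianF H).det = 1 :=
    Polynomial.eq_one_of_mul_eq_one_of_coeff_zero_eq_one hinv (coeff_zero_det_jacobianF H)
  intro m hm
  refine (hiff m).mpr (eq_zero_of_X_pow_dvd_substSeries_sub_one H (expDivCoeff_zero H 1)
    (fun M => ?_) (by omega))
  simpa [hdet] using inversionModXPow H M 1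
end

section
/- Let d ≥ 2 and let H = (H_1,...,H_n) be an n-tuple of polynomials in K[z_1,...,z_n] such that each H_i is either zero or homogeneous of degree d. Then det(I_n - JH) = 1 (i.e., the Jacobian determinant of F = z - H is identically 1) if and only if the Jacobian matrix JH is nilpotent. -/
/-
Substituting `z ↦ t • z` multiplies every entry of `JH`, a form of degree `e = d - 1 ≥ 1`, by
`tᵉ`, and turns `det (1 - JH)` into `det (1 - tᵉ JH)`, the reversed characteristic polynomial of
`JH` evaluated at `tᵉ`. So `det (1 - JH) = 1` forces the reversed characteristic polynomial to be
`1`, i.e. `charpoly JH = Xⁿ`, and Cayley–Hamilton gives `JHⁿ = 0`. Conversely, over the reduced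
ring `K[z]` a nilpotent matrix has characteristic polynomial `Xⁿ`, whose reverse evaluated at `1`
is `det (1 - JH)`.
-/

open MvPolynomial

namespace MvPolynomial

variable (σ R : Type*) [CommRing R]

noncomputable def scaleVars : MvPolynomial σ R →ₐ[R] Polynomial (MvPolynomial σ R) :=
  aeval fun i => Polynomial.C (X i) * Polynomial.X

variable {σ R}

lemma scaleVars_monomial (s : σ →₀ ℕ) (a : R) :
    scaleVars σ R (monomial s a) = Polynomial.C (monomial s a) * Polynomial.X ^ s.degree := by
  rw [scaleVars, aeval_monomial, monomial_eq, Finsupp.degree_apply]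
  simp only [mul_pow, Finsupp.prod, Finset.prod_mul_distrib, Finset.prod_pow_eq_pow_sum,
    map_mul, map_prod, map_pow, Polynomial.algebraMap_apply, mul_assoc]
  rfl

lemma IsHomogeneous.scaleVars_eq {p : MvPolynomial σ R} {m : ℕ} (hp : p.IsHomogeneous m) :
    scaleVars σ R p = Polynomial.C p * Polynomial.X ^ m := by
  conv_lhs => rw [p.as_sum, map_sum]
  conv_rhs => rw [p.as_sum, map_sum, Finset.sum_mul]
  refine Finset.sum_congr rfl fun s hs => ?_
  rw [scaleVars_monomial, Finsupp.degree_eq_weight_one]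
  congr 2
  exact hp (mem_support_iff.mp hs)

end MvPolynomial

namespace Matrix

open Polynomial

variable {R ι : Type*} [CommRing R] [Fintype ι] [DecidableEq ι]

lemma det_one_sub_eq_eval_one_charpolyRev (M : Matrix ι ι R) :
    (1 - M).det = M.charpolyRev.eval 1 := by
  rw [charpolyRev, ← coe_evalRingHom, RingHom.map_det]
  congr 1
  ext i j
  by_cases h : i = j <;> simp [h]

lemma charpolyRev_eq_reflect_charpoly [Nontrivial R] (M : Matrix ι ι R) :
    M.charpolyRev = M.charpoly.reflect (Fintype.card ι) := by
  rw [← reverse_charpoly, reverse, charpoly_natDegree_eq_dim]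

lemma charpolyRev_eq_one_iff [Nontrivial R] (M : Matrix ι ι R) :
    M.charpolyRev = 1 ↔ M.charpoly = Polynomial.X ^ Fintype.card ι := by
  rw [charpolyRev_eq_reflect_charpoly, ← reflect_one]
  exact ⟨fun h => by simpa using congrArg (reflect (Fintype.card ι)) h,
    fun h => by rw [h, reflect_reflect]⟩

lemma charpoly_eq_X_pow_iff_isNilpotent [IsReduced R] (M : Matrix ι ι R) :
    M.charpoly = Polynomial.X ^ Fintype.card ι ↔ IsNilpotent M := by
  refine ⟨fun h => ⟨Fintype.card ι, ?_⟩, fun h => sub_eq_zero.mp <| Polynomial.ext fun k => ?_⟩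
  · rw [← aeval_X_pow (R := R), ← h, aeval_self_charpoly]
  · simpa using
      (Polynomial.isNilpotent_iff.mp (isNilpotent_charpoly_sub_pow_of_isNilpotent h) k).eq_zero

lemma det_one_sub_eq_one_iff_charpolyRev_eq_one {σ : Type*} {M : Matrix ι ι (MvPolynomial σ R)}
    {e : ℕ} (he : 0 < e) (hM : ∀ i j, (M i j).IsHomogeneous e) :
    (1 - M).det = 1 ↔ M.charpolyRev = 1 := by
  refine ⟨fun h => expand_injective he ?_,
    fun h => by rw [det_one_sub_eq_eval_one_charpolyRev, h, eval_one]⟩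
  have hscale : (1 - M).map (scaleVars σ R) =
      (1 - (Polynomial.X : (MvPolynomial σ R)[X]) • M.map Polynomial.C).map (expand _ e) := by
    refine Matrix.ext fun i j => ?_
    obtain rfl | hij := eq_or_ne i j
    · simp [(hM i i).scaleVars_eq]
    · simp [hij, (hM i j).scaleVars_eq]
  calc expand _ e M.charpolyRev = scaleVars σ R (1 - M).det := by
        rw [charpolyRev, AlgHom.map_det, AlgHom.map_det, AlgHom.mapMatrix_apply,
          AlgHom.mapMatrix_apply, hscale]
    _ = expand _ e 1 := by rw [h, map_one, map_one]

end Matrix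

theorem det_one_sub_jacMat_eq_one_iff_isNilpotent_general
    {K : Type*} [Field K] {n : ℕ}
    (d : ℕ) (hd : 2 ≤ d)
    (H : Fin n → MvPolynomial (Fin n) K)
    (hH : ∀ i : Fin n, H i = 0 ∨ (H i).IsHomogeneous d) :
    (1 - jacMat H).det = 1 ↔ IsNilpotent (jacMat H) := by
  have hJ : ∀ i j, (jacMat H i j).IsHomogeneous (d - 1) := fun i j => by
    rcases hH i with h | h
    · simpa [jacMat, h] using isHomogeneous_zero _ _ _
    · exact h.pderiv
  rw [Matrix.det_one_sub_eq_one_iff_charpolyRev_eq_one (by omega) hJ,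
    Matrix.charpolyRev_eq_one_iff, Matrix.charpoly_eq_X_pow_iff_isNilpotent]

/-- Let `d ≥ 2` and let `H` be an `n`-tuple of polynomials each of which
is zero or homogeneous of degree `d`. Then `det(I_n - JH) = 1` iff `JH` is nilpotent. -/
theorem det_one_sub_jacMat_eq_one_iff_isNilpotent
    {K : Type*} [Field K] [CharZero K] {n : ℕ}
    (d : ℕ) (hd : 2 ≤ d)
    (H : Fin n → MvPolynomial (Fin n) K)
    (hH : ∀ i : Fin n, H i = 0 ∨ (H i).IsHomogeneous d) :
    (1 - jacMat H).det = 1 ↔ IsNilpotent (jacMat H) :=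
  det_one_sub_jacMat_eq_one_iff_isNilpotent_general d hd H hH
end
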